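/- Let K be a finite field and F a subfield of K, with q = |F| and ℓ = [K : F]. Let V be a finite-dimensional K-vector space and m a natural number. Then the number of F-submodules U of V (V regarded as an F-vector space) with dim_F U = m is congruent, modulo Φ_ℓ(q), to the number of K-submodules W of V with ℓ·dim_K W = m (in particular, to 0 if ℓ does not divide m). -/

import Mathlib

/-!
The group `Kˣ` acts on the `F`-subspaces of `V` of dimension `m`, and its fixed points are exactly
the `K`-subspaces. The scalars preserving an `F`-subspace `U` form an intermediate field `E` whose
units are the stabilizer of `U`, so a non-fixed orbit has `(q^ℓ - 1)/(q^d - 1)` elements, where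
`d = [E : F]` is a proper divisor of `ℓ`. As `(X^d - 1) Φ_ℓ` divides `X^ℓ - 1`, this orbit size is
a multiple of `Φ_ℓ(q)`.
-/

open Polynomial MulAction Pointwise Module

theorem MulAction.card_modEq_card_fixedPoints_of_dvd_card_orbit {G X : Type*} [Group G]
    [MulAction G X] [Finite X] {n : ℤ}
    (h : ∀ x ∉ fixedPoints G X, n ∣ Nat.card (orbit G x)) :
    (Nat.card X : ℤ) ≡ Nat.card (fixedPoints G X) [ZMOD n] := by
  classical
  have := Fintype.ofFinite X
  let ι : fixedPoints G X ↪ orbitRel.Quotient G X :=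
    ⟨fun x => ⟦x⟧, fun x y hxy => Subtype.ext <|
      mem_fixedPoints'.mp y.2 x (Quotient.exact hxy)⟩
  have hfixed : ∑ ω ∈ Finset.univ.map ι, Nat.card ω.orbit = Nat.card (fixedPoints G X) := by
    rw [Finset.sum_map, Nat.card_eq_fintype_card, Fintype.card_eq_sum_ones]
    refine Finset.sum_congr rfl fun x _ => ?_
    rw [Nat.card_eq_fintype_card]; exact mem_fixedPoints_iff_card_orbit_eq_one.mp x.2
  have hfree : n ∣ ∑ ω ∈ (Finset.univ.map ι)ᶜ, (Nat.card ω.orbit : ℤ) := by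
    refine Finset.dvd_sum fun ω hω => ?_
    rw [orbitRel.Quotient.orbit_eq_orbit_out ω Quotient.out_eq']
    refine h _ fun hfix => ?_
    simp only [Finset.mem_compl, Finset.mem_map, Finset.mem_univ, true_and, not_exists] at hω
    exact hω ⟨_, hfix⟩ (Quotient.out_eq _)
  rw [Nat.card_congr (selfEquivSigmaOrbits' G X), Nat.card_sigma,
    ← Finset.sum_compl_add_sum (Finset.univ.map ι), Nat.cast_add, hfixed]
  simpa using (Int.modEq_zero_iff_dvd.mpr hfree).add_right (Nat.card (fixedPoints G X) : ℤ)

namespace IntermediateField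

variable {F K : Type*} [Field F] [Field K] [Algebra F K]

theorem finrank_mem_properDivisors [FiniteDimensional F K] (E : IntermediateField F K)
    (hE : E ≠ ⊤) :
    finrank F E ∈ (finrank F K).properDivisors := by
  rw [← finrank_mul_finrank F E K, Nat.mem_properDivisors]
  refine ⟨dvd_mul_right _ _, lt_mul_of_one_lt_right finrank_pos ?_⟩
  exact lt_of_le_of_ne finrank_pos (Ne.symm (mt finrank_eq_one_iff_eq_top.mp hE))

theorem card_units_mul_cyclotomic_eval_dvd [Finite K] (E : IntermediateField F K)
    (hE : E ≠ ⊤) :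
    (Nat.card Eˣ : ℤ) * (cyclotomic (finrank F K) ℤ).eval (Nat.card F : ℤ) ∣ Nat.card Kˣ := by
  have : Finite F := .of_injective _ (algebraMap F K).injective
  have hq : 0 < Nat.card F := Nat.card_pos
  rw [Nat.card_units, Nat.card_units, natCard_eq_pow_finrank (K := F) (V := E),
    natCard_eq_pow_finrank (K := F) (V := K), Nat.cast_sub (Nat.one_le_pow _ _ hq),
    Nat.cast_sub (Nat.one_le_pow _ _ hq)]
  have hpoly := X_pow_sub_one_mul_cyclotomic_dvd_X_pow_sub_one_of_dvd ℤ
    (E.finrank_mem_properDivisors hE)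
  simpa using eval_dvd (x := (Nat.card F : ℤ)) hpoly

end IntermediateField

namespace Submodule

section Semiring

variable {F K V : Type*} [CommSemiring F] [Semiring K] [Algebra F K] [AddCommMonoid V]
  [Module K V] [Module F V] [IsScalarTower F K V]

variable (K) in
def scalarStabilizer (U : Submodule F V) : Subalgebra F K where
  carrier := {k | ∀ u ∈ U, k • u ∈ U}
  mul_mem' ha hb u hu := by rw [mul_smul]; exact ha _ (hb u hu)
  add_mem' ha hb u hu := by rw [add_smul]; exact U.add_mem (ha u hu) (hb u hu)
  algebraMap_mem' c u hu := by rw [algebraMap_smul]; exact U.smul_mem c hu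

theorem mem_scalarStabilizer {U : Submodule F V} {k : K} :
    k ∈ U.scalarStabilizer K ↔ ∀ u ∈ U, k • u ∈ U :=
  Iff.rfl

theorem scalarStabilizer_eq_top_iff {U : Submodule F V} :
    U.scalarStabilizer K = ⊤ ↔ ∃ W : Submodule K V, W.restrictScalars F = U := by
  refine ⟨fun h => ⟨{ U.toAddSubmonoid with smul_mem' := fun k u hu => ?_ }, rfl⟩, ?_⟩
  · exact mem_scalarStabilizer.mp (h ▸ Algebra.mem_top : k ∈ U.scalarStabilizer K) u hu
  · rintro ⟨W, rfl⟩
    exact eq_top_iff.mpr fun k _ u hu => W.smul_mem k hu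

end Semiring

section Units

variable {α F V : Type*} [Monoid α] [Semiring F] [AddCommMonoid V] [Module F V]
  [DistribMulAction α V] [SMulCommClass α F V]

theorem finrank_units_smul (a : αˣ) (U : Submodule F V) :
    finrank F (a • U : Submodule F V) = finrank F U :=
  (DistribMulAction.toLinearEquiv F V a).finrank_map_eq U

-- Acting by `αˣ` rather than by a general group makes the action of `Kˣ` below the one induced
-- from the pointwise action of `K`, which is the instance Lean finds for `Kˣ`.
variable (α F V) in
def finrankEqSubMulAction (m : ℕ) : SubMulAction αˣ (Submodule F V) where
  carrier := {U | finrank F U = m}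
  smul_mem' a U hU := (finrank_units_smul a U).trans hU

end Units

section FiniteField

variable {F K V : Type*} [Field F] [Field K] [Algebra F K] [AddCommGroup V]
  [Module K V] [Module F V] [IsScalarTower F K V]

variable (K) in
def stabilizerField [Algebra.IsAlgebraic F K] (U : Submodule F V) : IntermediateField F K :=
  (U.scalarStabilizer K).toIntermediateField' (Subalgebra.isField_of_algebraic _)

variable [Finite V]

-- Since `U` is finite, `a • U ⊆ U` already forces `a • U = U`.
theorem mem_stabilizer_units_iff (U : Submodule F V) (a : Kˣ) :
    a ∈ stabilizer Kˣ U ↔ (a : K) ∈ U.scalarStabilizer K :=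
  (SetLike.ext_iff.mp stabilizer_coe a).trans (mem_stabilizer_set' (Set.toFinite _))

theorem mem_fixedPoints_units_iff {U : Submodule F V} :
    U ∈ fixedPoints Kˣ (Submodule F V) ↔ ∃ W : Submodule K V, W.restrictScalars F = U := by
  rw [← scalarStabilizer_eq_top_iff, eq_top_iff]
  refine ⟨fun h k _ => ?_, fun h a => (mem_stabilizer_units_iff U a).mpr (h Algebra.mem_top)⟩
  rcases eq_or_ne k 0 with rfl | hk
  · exact zero_mem _
  · exact (mem_stabilizer_units_iff U (Units.mk0 k hk)).mp (h _)

theorem card_fixedPoints_finrankEqSubMulAction (m : ℕ) :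
    Nat.card (fixedPoints Kˣ (finrankEqSubMulAction K F V m)) =
      Nat.card {W : Submodule K V // finrank F K * finrank K W = m} := by
  refine (Nat.card_eq_of_bijective (fun W => ⟨⟨W.1.restrictScalars F,
      (finrank_mul_finrank F K W.1).symm.trans W.2⟩,
      fun a => Subtype.ext (mem_fixedPoints_units_iff.mpr ⟨W.1, rfl⟩ a)⟩) ⟨?_, ?_⟩).symm
  · exact fun W W' h => Subtype.ext (restrictScalars_injective F K V (congrArg (·.1.1) h))
  · rintro ⟨⟨U, hU⟩, hfix⟩
    obtain ⟨W, rfl⟩ := mem_fixedPoints_units_iff.mp fun a => congrArg Subtype.val (hfix a)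
    exact ⟨⟨W, (finrank_mul_finrank F K W).trans hU⟩, rfl⟩

section Algebraic

variable [Algebra.IsAlgebraic F K]

theorem card_stabilizer_units (U : Submodule F V) :
    Nat.card (stabilizer Kˣ U) = Nat.card (U.stabilizerField K)ˣ := by
  have : stabilizer Kˣ U = (U.stabilizerField K).toSubalgebra.toSubmonoid.units := by
    ext a
    rw [Submonoid.mem_units_iff, mem_stabilizer_units_iff]
    refine ⟨fun h => ⟨h, ?_⟩, And.left⟩
    exact Units.val_inv_eq_inv_val a ▸ inv_mem (s := U.stabilizerField K) h
  rw [this]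
  exact Nat.card_congr (Submonoid.unitsEquivUnitsType _).toEquiv

end Algebraic

theorem cyclotomic_eval_dvd_index_stabilizer_units [Finite K] {U : Submodule F V}
    (hU : U ∉ fixedPoints Kˣ (Submodule F V)) :
    (cyclotomic (finrank F K) ℤ).eval (Nat.card F : ℤ) ∣ (stabilizer Kˣ U).index := by
  have hE : U.stabilizerField K ≠ ⊤ := fun hE => hU fun a =>
    (U.mem_stabilizer_units_iff a).mpr <| show (a : K) ∈ U.stabilizerField K by simp [hE]
  have hdvd := (U.stabilizerField K).card_units_mul_cyclotomic_eval_dvd hE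
  rw [← Subgroup.card_mul_index (stabilizer Kˣ U), U.card_stabilizer_units, Nat.cast_mul] at hdvd
  exact (mul_dvd_mul_iff_left (Nat.cast_ne_zero.mpr Nat.card_pos.ne')).mp hdvd

end FiniteField

end Submodule

theorem card_submodules_modEq_cyclotomic_general (F K V : Type*) [Field F] [Field K]
    [Algebra F K] [Finite K] [AddCommGroup V] [Module K V] [Module F V]
    [IsScalarTower F K V] [FiniteDimensional K V] (m : ℕ) :
    (Nat.card {U : Submodule F V // Module.finrank F U = m} : ℤ) ≡
      (Nat.card {W : Submodule K V // Module.finrank F K * Module.finrank K W = m} : ℤ)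
      [ZMOD ((Polynomial.cyclotomic (Module.finrank F K) ℤ).eval (Nat.card F : ℤ))] := by
  have : Finite V := Module.finite_of_finite K
  have hmod := card_modEq_card_fixedPoints_of_dvd_card_orbit
    (X := Submodule.finrankEqSubMulAction K F V m) fun U hU => by
      rw [Nat.card_coe_set_eq, ← index_stabilizer, SubMulAction.stabilizer_of_subMul]
      exact Submodule.cyclotomic_eval_dvd_index_stabilizer_units
        fun hfix => hU fun a => Subtype.ext (hfix a)
  rwa [Submodule.card_fixedPoints_finrankEqSubMulAction] at hmod

/-- Let `F ⊆ K` be finite fields with `q = |F|` and `ℓ = [K : F]`, and let `V` be a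
finite-dimensional `K`-vector space.  Then the number of `F`-submodules `U` of `V` with
`dim_F U = m` is congruent, modulo `Φ_ℓ(q)`, to the number of `K`-submodules `W` of `V`
with `ℓ·dim_K W = m`. -/
theorem card_submodules_modEq_cyclotomic (F K V : Type*) [Field F] [Field K]
    [Algebra F K] [Finite F] [Finite K] [AddCommGroup V] [Module K V] [Module F V]
    [IsScalarTower F K V] [FiniteDimensional K V] (m : ℕ) :
    (Nat.card {U : Submodule F V // Module.finrank F U = m} : ℤ) ≡
      (Nat.card {W : Submodule K V // Module.finrank F K * Module.finrank K W = m} : ℤ)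
      [ZMOD ((Polynomial.cyclotomic (Module.finrank F K) ℤ).eval (Nat.card F : ℤ))] :=
  card_submodules_modEq_cyclotomic_general F K V m
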